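/- arXiv:math/0511313 — 5 statements merged into one kernel-verified Lean document; each statement's English description precedes it below -/
import Mathlib

section
/- Let A be an algebra, F and G maps from the set of reflexive admissible (compatible) binary relations on A to itself, and t a ternary term of A that is Mal'cev modulo F and G (i.e., whenever a R b with R reflexive admissible, we have a F(R) t(a,b,b) and t(a,a,b) G(R) b). If R is reflexive admissible, θ₁, θ₂, θ are arbitrary binary relations on A, S is reflexive admissible, and a R b, b θ₁ c, a θ₂ d, d S c, b θ d, then (a,c) ∈ F(R) ∘ cl(θ₂ ∪ θ ∪ θ₁) ∘ G(S), where cl(X) denotes the least admissible (compatible) relation containing X. -/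
structure Signature where
  symbols : Type
  arity : symbols → ℕ

structure UAAlgebra (σ : Signature) where
  carrier : Type
  ops : ∀ s, (Fin (σ.arity s) → carrier) → carrier

namespace Paper

variable {σ : Signature}

/-- Binary relations on the carrier of an algebra. -/
abbrev Rel (A : UAAlgebra σ) := A.carrier → A.carrier → Prop

/-- A relation is admissible (compatible) if it is preserved by all operations,
i.e. it is a subalgebra of `A × A`. -/
def Compatible (A : UAAlgebra σ) (R : Rel A) : Prop :=
  ∀ s (f g : Fin (σ.arity s) → A.carrier),
    (∀ j, R (f j) (g j)) → R (A.ops s f) (A.ops s g)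

/-- Reflexive and admissible. -/
def RAdm (A : UAAlgebra σ) (R : Rel A) : Prop :=
  Reflexive R ∧ Compatible A R

/-- Relational composition. -/
def comp {A : UAAlgebra σ} (R S : Rel A) : Rel A :=
  fun a c => ∃ b, R a b ∧ S b c

/-- `cl A X` : the least compatible relation containing `X`. -/
def cl (A : UAAlgebra σ) (X : Rel A) : Rel A :=
  fun a b => ∀ S : Rel A, Compatible A S → (∀ x y, X x y → S x y) → S a b

/-- The least reflexive compatible relation containing `X`. -/
def clRefl (A : UAAlgebra σ) (X : Rel A) : Rel A :=
  fun a b => ∀ S : Rel A, Reflexive S → Compatible A S → (∀ x y, X x y → S x y) → S a b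

/-- `altComp R S n` is `R ∘ₙ S`, the alternating composition
`R ∘ S ∘ R ∘ ⋯` with `n` factors (`n - 1` occurrences of `∘`);
by convention `R ∘₀ S` is the identity relation. -/
def altComp {A : UAAlgebra σ} (R S : Rel A) : ℕ → Rel A
  | 0 => Eq
  | n + 1 => comp R (altComp S R n)

/-- `relPow R n = Rⁿ`, with `R⁰` the identity relation. -/
def relPow {A : UAAlgebra σ} (R : Rel A) : ℕ → Rel A
  | 0 => Eq
  | n + 1 => comp R (relPow R n)

/-- The join `R + S = ⋃ₙ R ∘ₙ S`. -/
def join {A : UAAlgebra σ} (R S : Rel A) : Rel A :=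
  fun a b => ∃ n, altComp R S n a b

/-- Converse relation `R⁻`. -/
def conv {A : UAAlgebra σ} (R : Rel A) : Rel A :=
  fun a b => R b a

/-- Composition of a finite list of relations (empty list gives the identity). -/
def compList {A : UAAlgebra σ} : List (Rel A) → Rel A
  | [] => Eq
  | r :: l => comp r (compList l)

/-- Join of a family of relations: the union of all finite compositions of members. -/
def joinFam {A : UAAlgebra σ} {ι : Type} (R : ι → Rel A) : Rel A :=
  fun a b => ∃ l : List ι, compList (l.map R) a b

/-- The smallest congruence containing `X`. -/
def cg (A : UAAlgebra σ) (X : Rel A) : Rel A :=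
  fun a b => ∀ S : Rel A, Equivalence S → Compatible A S →
    (∀ x y, X x y → S x y) → S a b

/-- Terms of the signature `σ` in `n` variables. -/
inductive Term (σ : Signature) (n : ℕ) : Type
  | var : Fin n → Term σ n
  | op : ∀ s, (Fin (σ.arity s) → Term σ n) → Term σ n

/-- Evaluation of a term in an algebra under an environment. -/
def Term.eval {n : ℕ} (A : UAAlgebra σ) (env : Fin n → A.carrier) : Term σ n → A.carrier
  | .var k => env k
  | .op s args => A.ops s fun j => (args j).eval A env

/-- The ternary term operation induced by a ternary term. -/
def tApp (A : UAAlgebra σ) (t : Term σ 3) (a b c : A.carrier) : A.carrier :=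
  t.eval A ![a, b, c]

/-- `t` is Mal'cev modulo `F` and `G`: whenever `a R b` with `R` reflexive admissible,
`a F(R) t(a,b,b)` and `t(a,a,b) G(R) b`. -/
def MalcevMod (A : UAAlgebra σ) (F G : Rel A → Rel A) (t : Term σ 3) : Prop :=
  ∀ R : Rel A, RAdm A R → ∀ a b : A.carrier, R a b →
    F R a (tApp A t a b b) ∧ G R (tApp A t a a b) b

end Paper

namespace Paper

variable {σ : Signature} {A : UAAlgebra σ}

theorem Compatible.term_eval {Q : Rel A} (hQ : Compatible A Q) {n : ℕ} (u : Term σ n)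
    {e₁ e₂ : Fin n → A.carrier} (he : ∀ i, Q (e₁ i) (e₂ i)) : Q (u.eval A e₁) (u.eval A e₂) := by
  induction u with
  | var k => exact he k
  | op s args ih => exact hQ s _ _ fun j => ih j

theorem Compatible.tApp {Q : Rel A} (hQ : Compatible A Q) (t : Term σ 3)
    {a b c a' b' c' : A.carrier} (ha : Q a a') (hb : Q b b') (hc : Q c c') :
    Q (tApp A t a b c) (tApp A t a' b' c') :=
  hQ.term_eval t fun i => by fin_cases i <;> assumption

theorem cl_tApp (t : Term σ 3) {X : Rel A} {a b c a' b' c' : A.carrier}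
    (ha : X a a') (hb : X b b') (hc : X c c') :
    cl A X (tApp A t a b c) (tApp A t a' b' c') :=
  fun _ hQ hX => hQ.tApp t (hX _ _ ha) (hX _ _ hb) (hX _ _ hc)

end Paper

open Paper
theorem stmt0_general {σ : Signature} (A : UAAlgebra σ) (F G : Rel A → Rel A)
    (t : Term σ 3) (ht : MalcevMod A F G t)
    (R S : Rel A) (hR : RAdm A R) (hS : RAdm A S)
    (θ θ₁ θ₂ : Rel A) (a b c d : A.carrier)
    (hab : R a b) (hbc : θ₁ b c) (had : θ₂ a d) (hdc : S d c) (hbd : θ b d) :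
    comp (F R) (comp (cl A (fun u v => θ₂ u v ∨ θ u v ∨ θ₁ u v)) (G S)) a c :=
  ⟨tApp A t a b b, (ht R hR a b hab).1, tApp A t d d c,
    cl_tApp t (.inl had) (.inr (.inl hbd)) (.inr (.inr hbc)), (ht S hS d c hdc).2⟩

/-- Theorem 1(i): if `a R b θ₁ c`, `a θ₂ d S c` and `b θ d`, then
`(a,c) ∈ F(R) ∘ cl(θ₂ ∪ θ ∪ θ₁) ∘ G(S)`. -/
theorem stmt0 {σ : Signature} (A : UAAlgebra σ) (F G : Rel A → Rel A)
    (hF : ∀ R, RAdm A R → RAdm A (F R)) (hG : ∀ R, RAdm A R → RAdm A (G R))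
    (t : Term σ 3) (ht : MalcevMod A F G t)
    (R S : Rel A) (hR : RAdm A R) (hS : RAdm A S)
    (θ θ₁ θ₂ : Rel A) (a b c d : A.carrier)
    (hab : R a b) (hbc : θ₁ b c) (had : θ₂ a d) (hdc : S d c) (hbd : θ b d) :
    comp (F R) (comp (cl A (fun u v => θ₂ u v ∨ θ u v ∨ θ₁ u v)) (G S)) a c :=
  stmt0_general A F G t ht R S hR hS θ θ₁ θ₂ a b c d hab hbc had hdc hbd
end

section
/- Let A be an algebra with a term t Mal'cev modulo F and G. Then for all reflexive admissible relations R, S on A: R ∘ S ⊆ F(R) ∘ cl(R ∪ S) ∘ G(S) ⊆ F(R) ∘ S ∘ R ∘ G(S). -/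
open Paper

/-!
For `a R b S c`, the Mal'cev conditions give `a F(R) t(a,b,b)` and `t(b,b,c) G(S) c`, while
`t(a,b,b)` and `t(b,b,c)` are related by `cl(R ∪ S)` because the argument tuples are related
coordinatewise by `R`, `R`, `S`. For the second inclusion, `S ∘ R` is compatible and, `R` and `S`
being reflexive, contains `R ∪ S`, hence contains `cl(R ∪ S)`.
-/

namespace Paper

variable {σ : Signature} {A : UAAlgebra σ}

theorem Compatible.term_eval_s2 {P : Rel A} (hP : Compatible A P) {n : ℕ}
    {e f : Fin n → A.carrier} (h : ∀ j, P (e j) (f j)) (tm : Term σ n) :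
    P (tm.eval A e) (tm.eval A f) := by
  induction tm with
  | var k => exact h k
  | op s args ih => exact hP s _ _ ih

theorem Compatible.comp {P Q : Rel A} (hP : Compatible A P) (hQ : Compatible A Q) :
    Compatible A (comp P Q) := by
  intro s f g h
  choose m hPm hQm using h
  exact ⟨A.ops s m, hP s f m hPm, hQ s m g hQm⟩

theorem compatible_cl (X : Rel A) : Compatible A (cl A X) :=
  fun s f g h P hP hXP => hP s f g fun j => h j P hP hXP

theorem le_cl {X : Rel A} {x y : A.carrier} (h : X x y) : cl A X x y :=
  fun _ _ hXP => hXP x y h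

theorem cl_le {X P : Rel A} (hP : Compatible A P) (hXP : ∀ x y, X x y → P x y)
    {x y : A.carrier} (h : cl A X x y) : P x y :=
  h P hP hXP

theorem tApp_rel_tApp {P : Rel A} (hP : Compatible A P) (t : Term σ 3)
    {a b c a' b' c' : A.carrier} (ha : P a a') (hb : P b b') (hc : P c c') :
    P (tApp A t a b c) (tApp A t a' b' c') :=
  hP.term_eval_s2 (fun j => by fin_cases j <;> assumption) t

theorem comp_le_comp_cl_comp {F G : Rel A → Rel A} {t : Term σ 3} (ht : MalcevMod A F G t)
    {R S : Rel A} (hR : RAdm A R) (hS : RAdm A S) {a c : A.carrier} (h : comp R S a c) :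
    comp (F R) (comp (cl A (fun u v => R u v ∨ S u v)) (G S)) a c := by
  obtain ⟨b, hab, hbc⟩ := h
  have hmid : cl A (fun u v => R u v ∨ S u v) (tApp A t a b b) (tApp A t b b c) :=
    tApp_rel_tApp (compatible_cl _) t (le_cl (Or.inl hab)) (le_cl (Or.inl (hR.1 b)))
      (le_cl (Or.inr hbc))
  exact ⟨_, (ht R hR a b hab).1, _, hmid, (ht S hS b c hbc).2⟩

theorem cl_union_le_comp {R S : Rel A} (hR : RAdm A R) (hS : RAdm A S) {x y : A.carrier}
    (h : cl A (fun u v => R u v ∨ S u v) x y) : comp S R x y := by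
  refine cl_le (hS.2.comp hR.2) ?_ h
  rintro u v (huv | huv)
  · exact ⟨u, hS.1 u, huv⟩
  · exact ⟨v, huv, hR.1 v⟩

end Paper

theorem stmt2_general {σ : Signature} (A : UAAlgebra σ) (F G : Rel A → Rel A)
    (t : Term σ 3) (ht : MalcevMod A F G t)
    (R S : Rel A) (hR : RAdm A R) (hS : RAdm A S) :
    (∀ a c, comp R S a c →
        comp (F R) (comp (cl A (fun u v => R u v ∨ S u v)) (G S)) a c) ∧
    (∀ a c, comp (F R) (comp (cl A (fun u v => R u v ∨ S u v)) (G S)) a c →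
        comp (F R) (comp S (comp R (G S))) a c) := by
  refine ⟨fun a c h => comp_le_comp_cl_comp ht hR hS h, ?_⟩
  rintro a c ⟨x, hax, y, hxy, hyc⟩
  obtain ⟨z, hxz, hzy⟩ := cl_union_le_comp hR hS hxy
  exact ⟨x, hax, z, hxz, y, hzy, hyc⟩

/-- Theorem 1(iii): `R ∘ S ⊆ F(R) ∘ cl(R ∪ S) ∘ G(S) ⊆ F(R) ∘ S ∘ R ∘ G(S)`. -/
theorem stmt2 {σ : Signature} (A : UAAlgebra σ) (F G : Rel A → Rel A)
    (hF : ∀ R, RAdm A R → RAdm A (F R)) (hG : ∀ R, RAdm A R → RAdm A (G R))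
    (t : Term σ 3) (ht : MalcevMod A F G t)
    (R S : Rel A) (hR : RAdm A R) (hS : RAdm A S) :
    (∀ a c, comp R S a c →
        comp (F R) (comp (cl A (fun u v => R u v ∨ S u v)) (G S)) a c) ∧
    (∀ a c, comp (F R) (comp (cl A (fun u v => R u v ∨ S u v)) (G S)) a c →
        comp (F R) (comp S (comp R (G S))) a c) :=
  stmt2_general A F G t ht R S hR hS
end

section
/- Let A be an algebra with a term t Mal'cev modulo F and G. Then for every reflexive admissible relation R on A: R⁻ ⊆ F(R⁻) ∘ R ∘ G(R⁻) and R ⊆ F(R) ∘ R⁻ ∘ G(R), where R⁻ denotes the converse relation of R. -/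
open Paper

/-! Given `a R c`, the middle points are `t(a,c,c)` and `t(a,a,c)`: the Mal'cev property modulo
`F`, `G` supplies the outer factors, and evaluating `t` on the componentwise `R`-related triples
`(a,a,c)`, `(a,c,c)` gives `t(a,a,c) R t(a,c,c)`. The inclusion for `R⁻` is the same one for the
reflexive admissible relation `R⁻`, since `(R⁻)⁻ = R`. -/

namespace Paper

variable {σ : Signature} {A : UAAlgebra σ} {R : Rel A}

theorem Compatible.term_eval_s8 (hR : Compatible A R) {n : ℕ} {f g : Fin n → A.carrier}
    (hfg : ∀ k, R (f k) (g k)) : ∀ u : Term σ n, R (u.eval A f) (u.eval A g)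
  | .var k => hfg k
  | .op s args => hR s _ _ fun j => hR.term_eval_s8 hfg (args j)

theorem RAdm.conv (hR : RAdm A R) : RAdm A (conv R) :=
  ⟨fun x => hR.1 x, fun s f g h => hR.2 s g f h⟩

theorem RAdm.tApp_rel (hR : RAdm A R) (t : Term σ 3) {a c : A.carrier} (hac : R a c) :
    R (tApp A t a a c) (tApp A t a c c) :=
  hR.2.term_eval_s8 (fun k => by fin_cases k <;> [exact hR.1 a; exact hac; exact hR.1 c]) t

theorem MalcevMod.rel_le_comp_conv {F G : Rel A → Rel A} {t : Term σ 3}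
    (ht : MalcevMod A F G t) (hR : RAdm A R) {a c : A.carrier} (hac : R a c) :
    comp (F R) (comp (Paper.conv R) (G R)) a c :=
  ⟨tApp A t a c c, (ht R hR a c hac).1, tApp A t a a c, hR.tApp_rel t hac, (ht R hR a c hac).2⟩

end Paper

theorem stmt8_general {σ : Signature} (A : UAAlgebra σ) (F G : Rel A → Rel A)
    (t : Term σ 3) (ht : MalcevMod A F G t)
    (R : Rel A) (hR : RAdm A R) :
    (∀ a c, conv R a c → comp (F (conv R)) (comp R (G (conv R))) a c) ∧
    (∀ a c, R a c → comp (F R) (comp (conv R) (G R)) a c) :=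
  ⟨fun _ _ => ht.rel_le_comp_conv hR.conv, fun _ _ => ht.rel_le_comp_conv hR⟩

/-- Theorem 1(ix): `R⁻ ⊆ F(R⁻) ∘ R ∘ G(R⁻)` and `R ⊆ F(R) ∘ R⁻ ∘ G(R)`. -/
theorem stmt8 {σ : Signature} (A : UAAlgebra σ) (F G : Rel A → Rel A)
    (hF : ∀ R, RAdm A R → RAdm A (F R)) (hG : ∀ R, RAdm A R → RAdm A (G R))
    (t : Term σ 3) (ht : MalcevMod A F G t)
    (R : Rel A) (hR : RAdm A R) :
    (∀ a c, conv R a c → comp (F (conv R)) (comp R (G (conv R))) a c) ∧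
    (∀ a c, R a c → comp (F R) (comp (conv R) (G R)) a c) :=
  stmt8_general A F G t ht R hR
end

section
/- Let V be a variety and F, G monotone global operators on V for reflexive admissible relations satisfying the homomorphism property. If the free algebra X in V on two generators x, y admits a ternary term t with (x, t(x,y,y)) ∈ F_X(S) and (t(x,x,y), y) ∈ G_X(S), where S is the smallest reflexive admissible relation on X containing (x,y), then t is Mal'cev modulo F_A and G_A in every algebra A of V. -/
open Paper

namespace Paper

variable {σ : Signature}

/-- A set of equations (each in some number of variables). -/
abbrev EqTheory (σ : Signature) := Set (Σ n : ℕ, Term σ n × Term σ n)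

/-- `A` belongs to the variety axiomatized by `E`. -/
def Satisfies (A : UAAlgebra σ) (E : EqTheory σ) : Prop :=
  ∀ e ∈ E, ∀ env : Fin e.1 → A.carrier, e.2.1.eval A env = e.2.2.eval A env

/-- Homomorphisms of algebras. -/
structure Hom (A B : UAAlgebra σ) where
  toFun : A.carrier → B.carrier
  map_ops : ∀ s f, toFun (A.ops s f) = B.ops s (toFun ∘ f)

/-- `φ(R)`: the smallest reflexive compatible relation on the codomain containing
`{(φ b, φ c) : b R c}`. -/
def mapRel {A B : UAAlgebra σ} (φ : Hom A B) (R : Rel A) : Rel B :=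
  clRefl B (fun x y => ∃ a b, R a b ∧ φ.toFun a = x ∧ φ.toFun b = y)

/-- `X` with distinguished elements `x, y` is the free algebra on two generators in
the variety of `E`. -/
def IsFree2 (E : EqTheory σ) (X : UAAlgebra σ) (x y : X.carrier) : Prop :=
  Satisfies X E ∧ ∀ A : UAAlgebra σ, Satisfies A E → ∀ a b : A.carrier,
    ∃! φ : Hom X A, φ.toFun x = a ∧ φ.toFun y = b

/-- `X` with `x, y, z` is the free algebra on three generators in the variety of `E`. -/
def IsFree3 (E : EqTheory σ) (X : UAAlgebra σ) (x y z : X.carrier) : Prop :=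
  Satisfies X E ∧ ∀ A : UAAlgebra σ, Satisfies A E → ∀ a b c : A.carrier,
    ∃! φ : Hom X A, φ.toFun x = a ∧ φ.toFun y = b ∧ φ.toFun z = c

/-- A global operator for reflexive admissible relations on the variety of `E`,
mapping reflexive admissible relations to reflexive admissible relations. -/
def GlobalOp (E : EqTheory σ)
    (F : ∀ A : UAAlgebra σ, Satisfies A E → Rel A → Rel A) : Prop :=
  ∀ (A : UAAlgebra σ) (hA : Satisfies A E) (R : Rel A), RAdm A R → RAdm A (F A hA R)

/-- Monotonicity of a global operator. -/
def MonotoneOp (E : EqTheory σ)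
    (F : ∀ A : UAAlgebra σ, Satisfies A E → Rel A → Rel A) : Prop :=
  ∀ (A : UAAlgebra σ) (hA : Satisfies A E) (R S : Rel A), RAdm A R → RAdm A S →
    (∀ a b, R a b → S a b) → ∀ a b, F A hA R a b → F A hA S a b

/-- The homomorphism property: `φ(F_B(R)) ⊆ F_A(φ(R))`. -/
def HomProp (E : EqTheory σ)
    (F : ∀ A : UAAlgebra σ, Satisfies A E → Rel A → Rel A) : Prop :=
  ∀ (B A : UAAlgebra σ) (hB : Satisfies B E) (hA : Satisfies A E) (φ : Hom B A)
    (R : Rel B), RAdm B R →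
    ∀ b c, F B hB R b c → F A hA (mapRel φ R) (φ.toFun b) (φ.toFun c)

end Paper

/-! Given `a R b` in `A`, take the homomorphism `φ : X → A` with `x ↦ a`, `y ↦ b`. The preimage
of `R` under `φ` is reflexive admissible and contains `(x, y)`, so `φ(S) ⊆ R`; the homomorphism
property followed by monotonicity then moves the two relations on `X` to `F_A(R)` and `G_A(R)`. -/

namespace Paper

variable {σ : Signature}

lemma radm_clRefl (A : UAAlgebra σ) (X : Rel A) : RAdm A (clRefl A X) :=
  ⟨fun a _ hS _ _ => hS a, fun s f g hfg S hS hSc hXS => hSc s f g fun j => hfg j S hS hSc hXS⟩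

lemma Hom.map_eval {A B : UAAlgebra σ} (φ : Hom A B) {n : ℕ} (env : Fin n → A.carrier)
    (t : Term σ n) : φ.toFun (t.eval A env) = t.eval B (φ.toFun ∘ env) := by
  induction t with
  | var k => rfl
  | op s args ih =>
    simp only [Term.eval, φ.map_ops]
    exact congrArg (B.ops s) (funext ih)

lemma Hom.map_tApp {A B : UAAlgebra σ} (φ : Hom A B) (t : Term σ 3) (a b c : A.carrier) :
    φ.toFun (tApp A t a b c) = tApp B t (φ.toFun a) (φ.toFun b) (φ.toFun c) := by
  rw [tApp, tApp, φ.map_eval]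
  congr 1
  funext j
  fin_cases j <;> rfl

lemma RAdm.comap {A B : UAAlgebra σ} (φ : Hom A B) {R : Rel B} (hR : RAdm B R) :
    RAdm A fun a b => R (φ.toFun a) (φ.toFun b) :=
  ⟨fun _ => hR.1 _, fun s f g hfg => by
    dsimp only
    rw [φ.map_ops, φ.map_ops]
    exact hR.2 s _ _ hfg⟩

lemma mapRel_clRefl_le {A B : UAAlgebra σ} (φ : Hom A B) (X : Rel A) {R : Rel B}
    (hR : RAdm B R) (hXR : ∀ a b, X a b → R (φ.toFun a) (φ.toFun b)) :
    ∀ a b, mapRel φ (clRefl A X) a b → R a b := by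
  intro a b hab
  refine hab R hR.1 hR.2 ?_
  rintro _ _ ⟨c, d, hcd, rfl, rfl⟩
  have hcomap := hR.comap φ
  exact hcd _ hcomap.1 hcomap.2 hXR

lemma HomProp.map_clRefl {E : EqTheory σ} {F : ∀ A : UAAlgebra σ, Satisfies A E → Rel A → Rel A}
    (hFhom : HomProp E F) (hFmono : MonotoneOp E F) {A B : UAAlgebra σ}
    (hA : Satisfies A E) (hB : Satisfies B E) (φ : Hom A B) (X : Rel A) {R : Rel B}
    (hR : RAdm B R) (hXR : ∀ a b, X a b → R (φ.toFun a) (φ.toFun b)) {a b : A.carrier}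
    (hab : F A hA (clRefl A X) a b) : F B hB R (φ.toFun a) (φ.toFun b) :=
  hFmono B hB _ R (radm_clRefl B _) hR (mapRel_clRefl_le φ X hR hXR) _ _
    (hFhom A B hA hB φ _ (radm_clRefl A X) a b hab)

end Paper

theorem stmt15_general {σ : Signature} (E : EqTheory σ)
    (F G : ∀ A : UAAlgebra σ, Satisfies A E → Rel A → Rel A)
    (hFmono : MonotoneOp E F) (hGmono : MonotoneOp E G)
    (hFhom : HomProp E F) (hGhom : HomProp E G)
    (X : UAAlgebra σ) (x y : X.carrier) (hfree : IsFree2 E X x y)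
    (hX : Satisfies X E)
    (t : Term σ 3)
    (htx : F X hX (clRefl X (fun u v => u = x ∧ v = y)) x (tApp X t x y y))
    (hty : G X hX (clRefl X (fun u v => u = x ∧ v = y)) (tApp X t x x y) y) :
    ∀ (A : UAAlgebra σ) (hA : Satisfies A E), MalcevMod A (F A hA) (G A hA) t := by
  intro A hA R hR a b hab
  obtain ⟨φ, ⟨rfl, rfl⟩, -⟩ := hfree.2 A hA a b
  have hgen : ∀ u v, (u = x ∧ v = y) → R (φ.toFun u) (φ.toFun v) := by
    rintro _ _ ⟨rfl, rfl⟩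
    exact hab
  constructor
  · simpa only [φ.map_tApp] using hFhom.map_clRefl hFmono hX hA φ _ hR hgen htx
  · simpa only [φ.map_tApp] using hGhom.map_clRefl hGmono hX hA φ _ hR hgen hty

/-- Theorem 3, (iv) ⇒ (i): if in the free algebra `X` of `V` on generators `x, y`
there is a ternary term `t` with `x F_X(S) t(x,y,y)` and `t(x,x,y) G_X(S) y`, where
`S` is the smallest reflexive admissible relation containing `(x,y)`, then `t` is
Mal'cev modulo `F_A` and `G_A` in every algebra `A` of `V`. -/
theorem stmt15 {σ : Signature} (E : EqTheory σ)
    (F G : ∀ A : UAAlgebra σ, Satisfies A E → Rel A → Rel A)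
    (hF : GlobalOp E F) (hG : GlobalOp E G)
    (hFmono : MonotoneOp E F) (hGmono : MonotoneOp E G)
    (hFhom : HomProp E F) (hGhom : HomProp E G)
    (X : UAAlgebra σ) (x y : X.carrier) (hfree : IsFree2 E X x y)
    (hX : Satisfies X E)
    (t : Term σ 3)
    (htx : F X hX (clRefl X (fun u v => u = x ∧ v = y)) x (tApp X t x y y))
    (hty : G X hX (clRefl X (fun u v => u = x ∧ v = y)) (tApp X t x x y) y) :
    ∀ (A : UAAlgebra σ) (hA : Satisfies A E), MalcevMod A (F A hA) (G A hA) t :=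
  stmt15_general E F G hFmono hGmono hFhom hGhom X x y hfree hX t htx hty
end

section
/- Let V be a variety and F, G monotone global operators on V for reflexive admissible relations satisfying the homomorphism property. Suppose that in the free algebra X of V on two generators x, y one has S ⊆ F_X(S) ∘ S⁻ ∘ G_X(S), where S is the smallest reflexive admissible relation on X containing (x,y) and S⁻ is its converse. Then V has a ternary term t that is Mal'cev modulo F_A and G_A in every algebra A of V. -/
open Paper

/-!
Split the hypothesis at `(x, y) ∈ S`: `x F(S) p`, `q S p`, `q G(S) y`. Since `x, y` generate `X`,
`S` consists of the pairs `(t(x,x,y), t(x,y,y))`, so `q = t(x,x,y)` and `p = t(x,y,y)` for a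
ternary term `t`. Given `a R b` in `A`, the homomorphism `x ↦ a, y ↦ b` maps `S` into `R`; the
homomorphism property and monotonicity of `F`, `G` then give `a F(R) t(a,b,b)` and
`t(a,a,b) G(R) b`.
-/

namespace Paper

variable {σ : Signature}

lemma rAdm_clRefl (A : UAAlgebra σ) (X₀ : Rel A) : RAdm A (clRefl A X₀) :=
  ⟨fun a _ hrefl _ _ => hrefl a,
    fun s _ _ h S hrefl hcomp hsub => hcomp s _ _ fun j => h j S hrefl hcomp hsub⟩

section Closure

variable {A : UAAlgebra σ} {X₀ R : Rel A}

lemma le_clRefl {a b : A.carrier} (h : X₀ a b) : clRefl A X₀ a b :=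
  fun _ _ _ hsub => hsub a b h

lemma clRefl_le (hR : RAdm A R) (hsub : ∀ a b, X₀ a b → R a b) {a b : A.carrier}
    (h : clRefl A X₀ a b) : R a b :=
  h R hR.1 hR.2 hsub

end Closure

def Term.rename {n m : ℕ} (ρ : Fin n → Fin m) : Term σ n → Term σ m
  | .var k => .var (ρ k)
  | .op s args => .op s fun j => (args j).rename ρ

lemma Term.eval_rename {n m : ℕ} (A : UAAlgebra σ) (ρ : Fin n → Fin m)
    (env : Fin m → A.carrier) (u : Term σ n) :
    (u.rename ρ).eval A env = u.eval A (env ∘ ρ) := by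
  induction u with
  | var k => rfl
  | op s args ih => exact congrArg (A.ops s) (funext ih)

namespace Hom

variable {A B C : UAAlgebra σ}

def id (A : UAAlgebra σ) : Hom A A := ⟨fun a => a, fun _ _ => rfl⟩

def comp (ψ : Hom B C) (φ : Hom A B) : Hom A C :=
  ⟨ψ.toFun ∘ φ.toFun, fun s f => by simp only [Function.comp_apply, φ.map_ops, ψ.map_ops]; rfl⟩

lemma map_eval_s17 (φ : Hom A B) {n : ℕ} (u : Term σ n) (env : Fin n → A.carrier) :
    φ.toFun (u.eval A env) = u.eval B (φ.toFun ∘ env) := by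
  induction u with
  | var k => rfl
  | op s args ih => exact (φ.map_ops _ _).trans (congrArg (B.ops s) (funext ih))

lemma map_tApp_s17 (φ : Hom A B) (t : Term σ 3) (a b c : A.carrier) :
    φ.toFun (tApp A t a b c) = tApp B t (φ.toFun a) (φ.toFun b) (φ.toFun c) := by
  have henv : φ.toFun ∘ ![a, b, c] = ![φ.toFun a, φ.toFun b, φ.toFun c] := by
    funext k; fin_cases k <;> rfl
  rw [tApp, map_eval_s17, henv, tApp]

lemma comap_rAdm (φ : Hom A B) {R : Rel B} (hR : RAdm B R) :
    RAdm A fun a b => R (φ.toFun a) (φ.toFun b) :=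
  ⟨fun a => hR.1 _, fun s f g h => by simp only [φ.map_ops]; exact hR.2 s _ _ h⟩

lemma mapRel_le (φ : Hom A B) {S : Rel A} {R : Rel B} (hR : RAdm B R)
    (hSR : ∀ a b, S a b → R (φ.toFun a) (φ.toFun b)) {a b : B.carrier}
    (h : mapRel φ S a b) : R a b :=
  clRefl_le hR (fun _ _ ⟨a', b', hab', ha, hb⟩ => ha ▸ hb ▸ hSR a' b' hab') h

end Hom

lemma Satisfies.of_injective {E : EqTheory σ} {A B : UAAlgebra σ} (hB : Satisfies B E)
    (φ : Hom A B) (hφ : Function.Injective φ.toFun) : Satisfies A E :=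
  fun e he env => hφ <| by rw [φ.map_eval_s17, φ.map_eval_s17]; exact hB e he _

def generatedAlg (A : UAAlgebra σ) {n : ℕ} (env : Fin n → A.carrier) : UAAlgebra σ where
  carrier := {w // ∃ u : Term σ n, u.eval A env = w}
  ops s f := ⟨A.ops s fun j => (f j).1, .op s fun j => (f j).2.choose,
    congrArg (A.ops s) (funext fun j => (f j).2.choose_spec)⟩

def generatedAlg.val (A : UAAlgebra σ) {n : ℕ} (env : Fin n → A.carrier) :
    Hom (generatedAlg A env) A :=
  ⟨Subtype.val, fun _ _ => rfl⟩

section Free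

variable {E : EqTheory σ} {X : UAAlgebra σ} {x y : X.carrier}

lemma IsFree2.hom_ext (hfree : IsFree2 E X x y) {A : UAAlgebra σ} (hA : Satisfies A E)
    {φ ψ : Hom X A} (hx : φ.toFun x = ψ.toFun x) (hy : φ.toFun y = ψ.toFun y) : φ = ψ :=
  (hfree.2 A hA (ψ.toFun x) (ψ.toFun y)).unique ⟨hx, hy⟩ ⟨rfl, rfl⟩

lemma IsFree2.exists_term_eval_eq (hfree : IsFree2 E X x y) (w : X.carrier) :
    ∃ s : Term σ 2, s.eval X ![x, y] = w := by
  let Y := generatedAlg X ![x, y]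
  have hY : Satisfies Y E := hfree.1.of_injective (generatedAlg.val X _) Subtype.val_injective
  obtain ⟨φ, ⟨hφx, hφy⟩, -⟩ :=
    hfree.2 Y hY ⟨x, .var 0, rfl⟩ ⟨y, .var 1, rfl⟩
  have hid : (generatedAlg.val X _).comp φ = Hom.id X :=
    hfree.hom_ext hfree.1 (congrArg Subtype.val hφx) (congrArg Subtype.val hφy)
  have hw : (φ.toFun w).1 = w := congrFun (congrArg Hom.toFun hid) w
  exact hw ▸ (φ.toFun w).2

lemma IsFree2.exists_term_of_clRefl (hfree : IsFree2 E X x y) {a b : X.carrier}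
    (h : clRefl X (fun u v => u = x ∧ v = y) a b) :
    ∃ t : Term σ 3, a = tApp X t x x y ∧ b = tApp X t x y y := by
  refine clRefl_le (R := fun a b => ∃ t : Term σ 3, a = tApp X t x x y ∧ b = tApp X t x y y)
    ⟨fun w => ?_, fun s f g h => ?_⟩ ?_ h
  · obtain ⟨s, rfl⟩ := hfree.exists_term_eval_eq w
    have henv : ∀ c : X.carrier, ![x, c, y] ∘ ![(0 : Fin 3), 2] = ![x, y] := fun c => by
      funext k; fin_cases k <;> rfl
    exact ⟨s.rename ![0, 2], by rw [tApp, Term.eval_rename, henv],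
      by rw [tApp, Term.eval_rename, henv]⟩
  · choose t hf hg using h
    exact ⟨.op s t, congrArg (X.ops s) (funext hf), congrArg (X.ops s) (funext hg)⟩
  · rintro _ _ ⟨rfl, rfl⟩
    exact ⟨.var 1, rfl, rfl⟩

end Free

lemma HomProp.apply_of_map_le {E : EqTheory σ}
    {F : ∀ A : UAAlgebra σ, Satisfies A E → Rel A → Rel A}
    (hFhom : HomProp E F) (hFmono : MonotoneOp E F) {B A : UAAlgebra σ}
    (hB : Satisfies B E) (hA : Satisfies A E) (φ : Hom B A) {S : Rel B} {R : Rel A}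
    (hS : RAdm B S) (hR : RAdm A R) (hSR : ∀ a b, S a b → R (φ.toFun a) (φ.toFun b))
    {b c : B.carrier} (h : F B hB S b c) : F A hA R (φ.toFun b) (φ.toFun c) :=
  hFmono A hA _ R (rAdm_clRefl A _) hR (fun _ _ => φ.mapRel_le hR hSR) _ _
    (hFhom B A hB hA φ S hS b c h)

end Paper

theorem stmt17_general {σ : Signature} (E : EqTheory σ)
    (F G : ∀ A : UAAlgebra σ, Satisfies A E → Rel A → Rel A)
    (hFmono : MonotoneOp E F) (hGmono : MonotoneOp E G)
    (hFhom : HomProp E F) (hGhom : HomProp E G)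
    (X : UAAlgebra σ) (x y : X.carrier) (hfree : IsFree2 E X x y)
    (hX : Satisfies X E)
    (hS : ∀ a c, clRefl X (fun u v => u = x ∧ v = y) a c →
      comp (F X hX (clRefl X (fun u v => u = x ∧ v = y)))
        (comp (conv (clRefl X (fun u v => u = x ∧ v = y)))
          (G X hX (clRefl X (fun u v => u = x ∧ v = y)))) a c) :
    ∃ t : Term σ 3,
      ∀ (A : UAAlgebra σ) (hA : Satisfies A E), MalcevMod A (F A hA) (G A hA) t := by
  obtain ⟨p, hxp, q, hqp, hqy⟩ := hS x y (le_clRefl ⟨rfl, rfl⟩)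
  obtain ⟨t, rfl, rfl⟩ := hfree.exists_term_of_clRefl hqp
  refine ⟨t, fun A hA R hR a b hab => ?_⟩
  obtain ⟨φ, ⟨hφx, hφy⟩, -⟩ := hfree.2 A hA a b
  have hSR : ∀ u v, clRefl X (fun u v => u = x ∧ v = y) u v → R (φ.toFun u) (φ.toFun v) :=
    fun _ _ => clRefl_le (φ.comap_rAdm hR) fun _ _ ⟨hu, hv⟩ => hu ▸ hv ▸ hφx ▸ hφy ▸ hab
  have hF := hFhom.apply_of_map_le hFmono hX hA φ (rAdm_clRefl X _) hR hSR hxp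
  have hG := hGhom.apply_of_map_le hGmono hX hA φ (rAdm_clRefl X _) hR hSR hqy
  rw [φ.map_tApp_s17, hφx, hφy] at hF hG
  exact ⟨hF, hG⟩

/-- Theorem 3, (x) ⇒ (i): if in the free algebra `X` of `V` on generators `x, y`
one has `S ⊆ F_X(S) ∘ S⁻ ∘ G_X(S)`, where `S` is the smallest reflexive admissible
relation containing `(x,y)`, then `V` has a ternary term Mal'cev modulo `F_A` and
`G_A` in every algebra `A` of `V`. -/
theorem stmt17 {σ : Signature} (E : EqTheory σ)
    (F G : ∀ A : UAAlgebra σ, Satisfies A E → Rel A → Rel A)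
    (hF : GlobalOp E F) (hG : GlobalOp E G)
    (hFmono : MonotoneOp E F) (hGmono : MonotoneOp E G)
    (hFhom : HomProp E F) (hGhom : HomProp E G)
    (X : UAAlgebra σ) (x y : X.carrier) (hfree : IsFree2 E X x y)
    (hX : Satisfies X E)
    (hS : ∀ a c, clRefl X (fun u v => u = x ∧ v = y) a c →
      comp (F X hX (clRefl X (fun u v => u = x ∧ v = y)))
        (comp (conv (clRefl X (fun u v => u = x ∧ v = y)))
          (G X hX (clRefl X (fun u v => u = x ∧ v = y)))) a c) :
    ∃ t : Term σ 3,
      ∀ (A : UAAlgebra σ) (hA : Satisfies A E), MalcevMod A (F A hA) (G A hA) t :=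
  stmt17_general E F G hFmono hGmono hFhom hGhom X x y hfree hX hS
end
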